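/- Let p ≥ 1 and r ≥ 2. If G is a K_{r+1}-free graph of order n, then there exists a complete r-partite graph H on the same vertex set such that λ^(p)(H) ≥ λ^(p)(G). -/

import Mathlib

open Finset

open scoped Classical

/-- The p-spectral radius of a graph `G`:
`λ^(p)(G) = max { 2 ∑_{{i,j}∈E(G)} x_i x_j : ∑ |x_i|^p = 1 }`,
where the quadratic form is written as `∑ i ∑ j, if G.Adj i j then x i * x j else 0`. -/

noncomputable def pSpec {V : Type*} [Fintype V] (G : SimpleGraph V) (p : ℝ) : ℝ :=
  sSup {y : ℝ | ∃ x : V → ℝ, (∑ i, |x i| ^ p) = 1 ∧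
    y = ∑ i, ∑ j, if G.Adj i j then x i * x j else 0}

/-!
Replacing `x` by `|x|` does not decrease the quadratic form, so it suffices to dominate the form
of `G` at nonnegative weights `y`. Erdős' degree-majorization argument does this: take a vertex
`v` of maximal weighted degree, partition its `K_r`-free neighbourhood `B` recursively and add the
remaining vertices as one new part. On `B` the resulting complete `r`-partite graph dominates `G`
by induction, and each vertex outside `B` gets weighted degree `∑ j ∈ B, y j`, the maximum in
`G`. Among the finitely many complete `r`-partite graphs on the vertex set, one of largest
`p`-spectral radius then dominates every normalized `x`.
-/

namespace SimpleGraph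

variable {V : Type*}

noncomputable def adjForm (G : SimpleGraph V) (s t : Finset V) (x : V → ℝ) : ℝ :=
  ∑ i ∈ s, ∑ j ∈ t, if G.Adj i j then x i * x j else 0

variable (G : SimpleGraph V) {s t A B : Finset V} {x y : V → ℝ}

theorem adjForm_sdiff_add_left (hBA : B ⊆ A) (t : Finset V) (x : V → ℝ) :
    G.adjForm (A \ B) t x + G.adjForm B t x = G.adjForm A t x :=
  sum_sdiff hBA

theorem adjForm_sdiff_add_right (s : Finset V) (hBA : B ⊆ A) (x : V → ℝ) :
    G.adjForm s (A \ B) x + G.adjForm s B x = G.adjForm s A x := by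
  simp only [adjForm, ← sum_add_distrib, sum_sdiff hBA]

theorem adjForm_congr {H : SimpleGraph V} (h : ∀ i ∈ s, ∀ j ∈ t, G.Adj i j ↔ H.Adj i j) :
    G.adjForm s t x = H.adjForm s t x :=
  sum_congr rfl fun i hi => sum_congr rfl fun j hj => by rw [if_congr (h i hi j hj) rfl rfl]

theorem adjForm_eq_mul_of_forall_adj (h : ∀ i ∈ s, ∀ j ∈ t, G.Adj i j) :
    G.adjForm s t x = (∑ i ∈ s, x i) * ∑ j ∈ t, x j := by
  rw [sum_mul_sum]
  exact sum_congr rfl fun i hi => sum_congr rfl fun j hj => if_pos (h i hi j hj)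

theorem adjForm_eq_zero_of_forall_not_adj (h : ∀ i ∈ s, ∀ j ∈ t, ¬G.Adj i j) :
    G.adjForm s t x = 0 :=
  sum_eq_zero fun i hi => sum_eq_zero fun j hj => if_neg (h i hi j hj)

theorem adjForm_eq_sum_mul_degree (s t : Finset V) (x : V → ℝ) :
    G.adjForm s t x = ∑ i ∈ s, x i * ∑ j ∈ t with G.Adj i j, x j := by
  simp only [adjForm, sum_filter, mul_sum, mul_ite, mul_zero]

theorem adjForm_le_mul_of_degree_le (hy : ∀ i, 0 ≤ y i) {D : ℝ}
    (hD : ∀ i ∈ s, ∑ j ∈ t with G.Adj i j, y j ≤ D) :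
    G.adjForm s t y ≤ (∑ i ∈ s, y i) * D := by
  rw [adjForm_eq_sum_mul_degree, sum_mul]
  exact sum_le_sum fun i hi => mul_le_mul_of_nonneg_left (hD i hi) (hy i)

theorem adjForm_le_mul (hy : ∀ i, 0 ≤ y i) (s t : Finset V) :
    G.adjForm s t y ≤ (∑ i ∈ s, y i) * ∑ j ∈ t, y j :=
  G.adjForm_le_mul_of_degree_le hy fun _ _ => sum_le_sum_of_subset_of_nonneg
    (filter_subset _ _) fun j _ _ => hy j

theorem adjForm_le_adjForm_abs (s t : Finset V) (x : V → ℝ) :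
    G.adjForm s t x ≤ G.adjForm s t fun i => |x i| := by
  refine sum_le_sum fun i _ => sum_le_sum fun j _ => ?_
  split_ifs
  · exact (le_abs_self _).trans (abs_mul _ _).le
  · exact le_rfl

theorem adjForm_le_of_degree_le_sum (hy : ∀ i, 0 ≤ y i) (hBA : B ⊆ A)
    (hdeg : ∀ i ∈ A, ∑ j ∈ A with G.Adj i j, y j ≤ ∑ j ∈ B, y j) :
    G.adjForm A A y ≤ G.adjForm B B y + 2 * ((∑ i ∈ B, y i) * ∑ j ∈ A \ B, y j) := by
  have hout : G.adjForm (A \ B) A y ≤ (∑ i ∈ A \ B, y i) * ∑ j ∈ B, y j :=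
    G.adjForm_le_mul_of_degree_le hy fun i hi => hdeg i (mem_sdiff.1 hi).1
  have hcross := G.adjForm_le_mul hy B (A \ B)
  rw [← G.adjForm_sdiff_add_left hBA, ← G.adjForm_sdiff_add_right B hBA]
  linarith [mul_comm (∑ i ∈ B, y i) (∑ j ∈ A \ B, y j)]

theorem adjForm_comap_of_castSucc_or_last {r : ℕ} {g : V → Fin r} {f : V → Fin (r + 1)}
    (hBA : B ⊆ A) (hfB : ∀ i ∈ B, f i = (g i).castSucc)
    (hfC : ∀ i ∈ A \ B, f i = Fin.last r) (y : V → ℝ) :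
    (SimpleGraph.comap f ⊤).adjForm A A y =
      (SimpleGraph.comap g ⊤).adjForm B B y +
        2 * ((∑ i ∈ B, y i) * ∑ j ∈ A \ B, y j) := by
  set H := SimpleGraph.comap f ⊤
  have hBB : H.adjForm B B y = (SimpleGraph.comap g ⊤).adjForm B B y :=
    adjForm_congr _ fun i hi j hj => by simp [H, hfB i hi, hfB j hj]
  have hBC : H.adjForm B (A \ B) y = (∑ i ∈ B, y i) * ∑ j ∈ A \ B, y j :=
    adjForm_eq_mul_of_forall_adj _ fun i hi j hj => by
      simp [H, hfB i hi, hfC j hj, Fin.castSucc_ne_last]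
  have hCB : H.adjForm (A \ B) B y = (∑ i ∈ A \ B, y i) * ∑ j ∈ B, y j :=
    adjForm_eq_mul_of_forall_adj _ fun i hi j hj => by
      simp [H, hfC i hi, hfB j hj, (Fin.castSucc_ne_last _).symm]
  have hCC : H.adjForm (A \ B) (A \ B) y = 0 :=
    adjForm_eq_zero_of_forall_not_adj _ fun i hi j hj => by
      simp [H, hfC i hi, hfC j hj]
  rw [← H.adjForm_sdiff_add_left hBA, ← H.adjForm_sdiff_add_right _ hBA,
    ← H.adjForm_sdiff_add_right _ hBA, hBB, hBC, hCB, hCC]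
  ring

theorem exists_adjForm_le_completePartite (hy : ∀ i, 0 ≤ y i) {r : ℕ} (hr : 1 ≤ r) :
    ∀ {A : Finset V}, G.CliqueFreeOn A (r + 1) →
      ∃ f : V → Fin r, G.adjForm A A y ≤ (SimpleGraph.comap f ⊤).adjForm A A y := by
  induction r, hr using Nat.le_induction with
  | base =>
    intro A hA
    refine ⟨fun _ => 0, le_of_eq ?_⟩
    rw [cliqueFreeOn_two] at hA
    rw [G.adjForm_eq_zero_of_forall_not_adj fun i hi j hj hij => hA hi hj hij.ne hij,
      adjForm_eq_zero_of_forall_not_adj _ fun i _ j _ => by simp]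
  | succ r hr ih =>
    intro A hA
    rcases A.eq_empty_or_nonempty with rfl | hAne
    · exact ⟨fun _ => 0, by simp [adjForm]⟩
    obtain ⟨v, hvA, hv⟩ := A.exists_max_image (fun i => ∑ j ∈ A with G.Adj i j, y j) hAne
    set B := A.filter (G.Adj v)
    have hBA : B ⊆ A := filter_subset _ _
    have hB : G.CliqueFreeOn B (r + 1) :=
      (hA.of_succ G (mem_coe.2 hvA)).subset G fun u hu => by simpa [B] using hu
    obtain ⟨g, hg⟩ := ih hB
    refine ⟨fun i => if i ∈ B then (g i).castSucc else Fin.last r, ?_⟩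
    rw [adjForm_comap_of_castSucc_or_last hBA (fun i hi => if_pos hi)
      (fun i hi => if_neg (mem_sdiff.1 hi).2)]
    linarith [G.adjForm_le_of_degree_le_sum hy hBA hv]

end SimpleGraph

open SimpleGraph

section pSpec

variable {V : Type*} [Fintype V] {p : ℝ}

theorem abs_le_one_of_sum_rpow_eq_one (hp : 0 < p) {x : V → ℝ} (hx : ∑ i, |x i| ^ p = 1)
    (i : V) : |x i| ≤ 1 := by
  by_contra! h
  have : |x i| ^ p ≤ 1 :=
    hx ▸ single_le_sum (fun j _ => Real.rpow_nonneg (abs_nonneg (x j)) p) (mem_univ i)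
  exact this.not_gt (Real.one_lt_rpow h hp)

theorem pSpec_bddAbove (hp : 0 < p) (G : SimpleGraph V) :
    BddAbove {y | ∃ x : V → ℝ, ∑ i, |x i| ^ p = 1 ∧ y = G.adjForm univ univ x} := by
  refine ⟨Fintype.card V * Fintype.card V, ?_⟩
  rintro _ ⟨x, hx, rfl⟩
  have hsum : ∑ i, |x i| ≤ Fintype.card V := by
    simpa using sum_le_sum fun i (_ : i ∈ univ) => abs_le_one_of_sum_rpow_eq_one hp hx i
  calc G.adjForm univ univ x ≤ G.adjForm univ univ fun i => |x i| :=
        G.adjForm_le_adjForm_abs _ _ x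
    _ ≤ (∑ i, |x i|) * ∑ i, |x i| := G.adjForm_le_mul (fun i => abs_nonneg (x i)) _ _
    _ ≤ Fintype.card V * Fintype.card V := by gcongr

theorem adjForm_le_pSpec (hp : 0 < p) (G : SimpleGraph V) {x : V → ℝ}
    (hx : ∑ i, |x i| ^ p = 1) : G.adjForm univ univ x ≤ pSpec G p :=
  le_csSup (pSpec_bddAbove hp G) ⟨x, hx, rfl⟩

theorem pSpec_nonneg [Nonempty V] (hp : 0 < p) (G : SimpleGraph V) : 0 ≤ pSpec G p := by
  obtain ⟨v⟩ := ‹Nonempty V›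
  have hx : ∑ i, |(Pi.single v 1 : V → ℝ) i| ^ p = 1 := by
    simp [Pi.single_apply, apply_ite (fun t : ℝ => |t| ^ p), Real.zero_rpow hp.ne']
  have hform : G.adjForm univ univ (Pi.single v 1) = 0 := by
    refine sum_eq_zero fun i _ => sum_eq_zero fun j _ => ?_
    by_cases hij : G.Adj i j
    · rcases eq_or_ne i v with rfl | hi
      · simp [hij.ne.symm]
      · simp [hi]
    · exact if_neg hij
  exact hform ▸ adjForm_le_pSpec hp G hx

theorem exists_pSpec_le_pSpec_completePartite (hp : 0 < p) {r : ℕ} {G : SimpleGraph V}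
    (hG : G.CliqueFree (r + 1)) :
    ∃ f : V → Fin r, pSpec G p ≤ pSpec (SimpleGraph.comap f ⊤) p := by
  rcases isEmpty_or_nonempty V with _ | _
  · exact ⟨isEmptyElim, by rw [Subsingleton.elim G (SimpleGraph.comap isEmptyElim ⊤)]⟩
  have hr : 1 ≤ r := Nat.one_le_iff_ne_zero.2 fun hr0 =>
    not_isEmpty_of_nonempty V (cliqueFree_one.1 (hr0 ▸ hG))
  have : Nonempty (Fin r) := ⟨⟨0, hr⟩⟩
  obtain ⟨F, -, hF⟩ := univ.exists_max_image
    (fun f : V → Fin r => pSpec (SimpleGraph.comap f ⊤) p) univ_nonempty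
  refine ⟨F, Real.sSup_le ?_ (pSpec_nonneg hp _)⟩
  rintro _ ⟨x, hx, rfl⟩
  obtain ⟨f, hf⟩ :=
    G.exists_adjForm_le_completePartite (fun i => abs_nonneg (x i)) hr hG.cliqueFreeOn
  calc G.adjForm univ univ x ≤ G.adjForm univ univ fun i => |x i| :=
        G.adjForm_le_adjForm_abs _ _ x
    _ ≤ (SimpleGraph.comap f ⊤).adjForm univ univ fun i => |x i| := hf
    _ ≤ pSpec (SimpleGraph.comap f ⊤) p := adjForm_le_pSpec hp _ (by simpa using hx)
    _ ≤ pSpec (SimpleGraph.comap F ⊤) p := hF f (mem_univ f)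

end pSpec

theorem stmt12_general {n : ℕ} (r : ℕ) (p : ℝ) (hp : 1 ≤ p)
    (G : SimpleGraph (Fin n)) (hG : G.CliqueFree (r + 1)) :
    ∃ f : Fin n → Fin r,
      pSpec G p ≤ pSpec (SimpleGraph.comap f (⊤ : SimpleGraph (Fin r))) p :=
  exists_pSpec_le_pSpec_completePartite (by linarith) hG

theorem stmt12 {n : ℕ} (r : ℕ) (hr : 2 ≤ r) (p : ℝ) (hp : 1 ≤ p)
    (G : SimpleGraph (Fin n)) (hG : G.CliqueFree (r + 1)) :
    ∃ f : Fin n → Fin r,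
      pSpec G p ≤ pSpec (SimpleGraph.comap f (⊤ : SimpleGraph (Fin r))) p :=
  stmt12_general r p hp G hG
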